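/- Let n ≥ 4 be an even integer and Λ = Cay(D_{2n}, Ψ) with Ψ = {b, ab, ..., a^{n-1}b} ∪ {a^{n/2}}. The complement of Λ is isomorphic to the disjoint union of 2 copies of the cocktail party graph CP(n/2) (the complete multipartite graph with n/2 parts of size 2). -/

import Mathlib

/-- The Cayley graph of a group with connection set `S`. -/
def cayley {G : Type*} [Group G] (S : Set G) : SimpleGraph G :=
  SimpleGraph.fromRel (fun x y => x⁻¹ * y ∈ S)

/-- The connection set `Ψ = {b, ab, …, a^{n-1}b} ∪ {a^{n/2}}` in the dihedral group. -/
def Psi (n : ℕ) : Set (DihedralGroup n) :=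
  {x | ∃ i : ZMod n, x = DihedralGroup.sr i} ∪ {DihedralGroup.r ((n / 2 : ℕ) : ZMod n)}

/-!
Write `n = 2m`. The products `a^{-i} · a^j b` and `(a^i b)^{-1} · a^j` are reflections, all of
which lie in `Ψ`, so the complement has no edges between rotations and reflections. Since
`(a^i b)^{-1} · a^j b = a^{j-i} = (a^i)^{-1} · a^j`, on either coset distinct `i, j` are adjacent
in the complement exactly when `j - i ≠ m`, i.e. when `i ≢ j (mod m)`. So each half is the Turán
graph on `ℤ/2m` whose parts are the residue classes mod `m`, which is `CP(m)`.
-/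

open DihedralGroup SimpleGraph

namespace ZMod

theorem val_finEquiv_symm {n : ℕ} [NeZero n] (x : ZMod n) :
    ((finEquiv n).symm x : ℕ) = x.val := by
  cases n with
  | zero => exact absurd rfl (NeZero.ne 0)
  | succ k => rfl

theorem cast_eq_zero_iff_of_mul_two {m : ℕ} [NeZero m] (x : ZMod (m * 2)) :
    (x.cast : ZMod m) = 0 ↔ x = 0 ∨ x = m := by
  constructor
  · rw [cast_eq_val, natCast_eq_zero_iff]
    rintro ⟨k, hk⟩
    have hk2 : k < 2 := Nat.lt_of_mul_lt_mul_left (hk ▸ x.val_lt)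
    interval_cases k
    · left; rwa [mul_zero, val_eq_zero] at hk
    · right; rw [← natCast_zmod_val x, hk, mul_one]
  · rintro (rfl | rfl)
    · exact cast_zero
    · rw [cast_natCast (dvd_mul_right m 2), natCast_self]

theorem val_mod_eq_val_mod_iff {m : ℕ} [NeZero m] (x y : ZMod (m * 2)) :
    x.val % m = y.val % m ↔ y - x = 0 ∨ y - x = m := by
  rw [← natCast_eq_natCast_iff', ← cast_eq_val, ← cast_eq_val, ← cast_eq_zero_iff_of_mul_two,
    cast_sub (dvd_mul_right m 2), eq_comm, sub_eq_zero]

end ZMod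

theorem compl_cayley_adj_iff_of_inv_mem {G : Type*} [Group G] {S : Set G}
    (hS : ∀ s ∈ S, s⁻¹ ∈ S) {x y : G} : (cayley S)ᶜ.Adj x y ↔ x ≠ y ∧ x⁻¹ * y ∉ S := by
  have hsymm : y⁻¹ * x ∈ S ↔ x⁻¹ * y ∈ S :=
    ⟨fun h => by simpa using hS _ h, fun h => by simpa using hS _ h⟩
  simp only [cayley, compl_adj, fromRel_adj, hsymm, or_self]
  tauto

section Psi

variable {m : ℕ}

theorem sr_mem_Psi {n : ℕ} (i : ZMod n) : sr i ∈ Psi n := Or.inl ⟨i, rfl⟩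

theorem r_mem_Psi_mul_two {i : ZMod (m * 2)} : r i ∈ Psi (m * 2) ↔ i = m := by
  simp [Psi, Nat.mul_div_cancel m two_pos]

theorem inv_mem_Psi_mul_two : ∀ s ∈ Psi (m * 2), s⁻¹ ∈ Psi (m * 2) := by
  have hneg : -(m : ZMod (m * 2)) = m :=
    neg_eq_of_add_eq_zero_right (by rw [← Nat.cast_add, ← mul_two, ZMod.natCast_self])
  rintro s (⟨i, rfl⟩ | hs)
  · exact sr_mem_Psi i
  · rw [Set.mem_singleton_iff, Nat.mul_div_cancel m two_pos] at hs
    rw [hs, inv_r, hneg, r_mem_Psi_mul_two]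

theorem compl_cayley_Psi_adj_r_r {i j : ZMod (m * 2)} :
    (cayley (Psi (m * 2)))ᶜ.Adj (r i) (r j) ↔ ¬(j - i = 0 ∨ j - i = m) := by
  rw [compl_cayley_adj_iff_of_inv_mem inv_mem_Psi_mul_two, inv_r, r_mul_r, r_mem_Psi_mul_two,
    ne_eq, r.injEq, neg_add_eq_sub, sub_eq_zero, eq_comm (a := j), not_or]

theorem compl_cayley_Psi_adj_sr_sr {i j : ZMod (m * 2)} :
    (cayley (Psi (m * 2)))ᶜ.Adj (sr i) (sr j) ↔ ¬(j - i = 0 ∨ j - i = m) := by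
  rw [compl_cayley_adj_iff_of_inv_mem inv_mem_Psi_mul_two, inv_sr, sr_mul_sr, r_mem_Psi_mul_two,
    ne_eq, sr.injEq, sub_eq_zero, eq_comm (a := j), not_or]

theorem compl_cayley_Psi_not_adj_r_sr {i j : ZMod (m * 2)} :
    ¬(cayley (Psi (m * 2)))ᶜ.Adj (r i) (sr j) := by
  rw [compl_cayley_adj_iff_of_inv_mem inv_mem_Psi_mul_two, inv_r, r_mul_sr]
  exact fun h => h.2 (sr_mem_Psi _)

end Psi

def complCayleyPsiIsoTuran (m : ℕ) [NeZero m] :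
    (cayley (Psi (m * 2)))ᶜ ≃g turanGraph (m * 2) m ⊕g turanGraph (m * 2) m where
  toEquiv := equivSum.trans (Equiv.sumCongr (ZMod.finEquiv _).symm.toEquiv
    (ZMod.finEquiv _).symm.toEquiv)
  map_rel_iff' {x y} := by
    cases x <;> cases y <;>
      simp only [Equiv.trans_apply, equivSum_apply, Equiv.sumCongr_apply, Sum.map_inl,
        Sum.map_inr, sum_adj, turanGraph_adj, RingEquiv.toEquiv_eq_coe, RingEquiv.coe_toEquiv,
        ZMod.val_finEquiv_symm, ne_eq, ZMod.val_mod_eq_val_mod_iff, compl_cayley_Psi_adj_r_r,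
        compl_cayley_Psi_adj_sr_sr]
    · exact iff_of_false not_false compl_cayley_Psi_not_adj_r_sr
    · exact iff_of_false not_false fun h => compl_cayley_Psi_not_adj_r_sr h.symm

theorem cayley_compl_iso_two_cocktail (n : ℕ) (hn : 4 ≤ n) (hev : Even n) :
    Nonempty ((cayley (Psi n))ᶜ ≃g
      ((SimpleGraph.completeMultipartiteGraph fun _ : Fin (n / 2) => Fin 2).sum
        (SimpleGraph.completeMultipartiteGraph fun _ : Fin (n / 2) => Fin 2))) := by
  obtain ⟨m, rfl⟩ : ∃ m, n = m * 2 := ⟨n / 2, (Nat.div_mul_cancel (even_iff_two_dvd.mp hev)).symm⟩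
  have : NeZero m := ⟨by omega⟩
  rw [Nat.mul_div_cancel m two_pos]
  let cocktail : turanGraph (m * 2) m ≃g completeMultipartiteGraph fun _ : Fin m => Fin 2 :=
    completeEquipartiteGraph.turanGraph.symm.trans completeEquipartiteGraph.completeMultipartiteGraph
  exact ⟨(complCayleyPsiIsoTuran m).trans (Iso.sumCongr cocktail cocktail)⟩
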